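/- Let H be a simply connected combinatorial strata structure endowed with a datum (N, {P_J}) of nodal strata, with nodal separating blocks enumerated B₁, …, B_n and maps Φ_m as defined. Fix 0 ≤ m ≤ n, an element c ∈ Δ_m, and {i}, {j} ∈ Φ_m^{-1}(c). Then there is a 1-path γ in H joining {i} and {j} such that κ_{B_ℓ}(γ) = 0 for every ℓ = 1, 2, …, m. -/

import Mathlib

/-- A combinatorial strata structure with minimal set of indices the (finite) type `I`:
an open subset of `𝒫(I)` (i.e. a family closed under taking subsets) containing all
singletons. -/
def IsCSS {I : Type*} (H : Set (Finset I)) : Prop :=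
  (∀ J ∈ H, ∀ J' : Finset I, J' ⊆ J → J' ∈ H) ∧ ∀ i : I, ({i} : Finset I) ∈ H

/-- `level H k` is `H(k)`, the set of strata of `H` with exactly `k` elements. -/
def level {I : Type*} (H : Set (Finset I)) (k : ℕ) : Set (Finset I) :=
  {J ∈ H | J.card = k}

/-- A `k`-path in `H`: a nonempty sequence of strata of `H(k)` such that the union of
any two consecutive entries lies in `H(k+1)`. -/
def IsKPath {I : Type*} [DecidableEq I] (H : Set (Finset I)) (k : ℕ)
    (γ : List (Finset I)) : Prop :=
  γ ≠ [] ∧ (∀ J ∈ γ, J ∈ level H k) ∧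
    γ.Chain' fun J J' => (J ∪ J') ∈ level H (k + 1)

/-- The path `γ` joins `J` and `J'`. -/
def Joins {I : Type*} (γ : List (Finset I)) (J J' : Finset I) : Prop :=
  γ.head? = some J ∧ γ.getLast? = some J'

/-- The subsupport of a path: the sequence of unions of consecutive entries. -/
def subSup {I : Type*} [DecidableEq I] (γ : List (Finset I)) : List (Finset I) :=
  List.zipWith (· ∪ ·) γ γ.tail

open Classical in
/-- `kappa B γ`: the number of entries of the subsupport of `γ` that belong to `B`. -/
noncomputable def kappa {I : Type*} [DecidableEq I] (B : Set (Finset I))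
    (γ : List (Finset I)) : ℕ :=
  (subSup γ).countP fun J => decide (J ∈ B)

/-- `A` is `k`-connected in `H`: any two elements of `A` are joined by a `k`-path in `H`
with support contained in `A`. -/
def KConnectedIn {I : Type*} [DecidableEq I] (H : Set (Finset I)) (k : ℕ)
    (A : Set (Finset I)) : Prop :=
  ∀ J ∈ A, ∀ J' ∈ A, ∃ γ : List (Finset I),
    IsKPath H k γ ∧ Joins γ J J' ∧ ∀ K ∈ γ, K ∈ A

/-- `C` is a `k`-connected component of `A` in `H`: a maximal nonempty `k`-connected
subset of `A`. -/
def IsKComponent {I : Type*} [DecidableEq I] (H : Set (Finset I)) (k : ℕ)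
    (A C : Set (Finset I)) : Prop :=
  C.Nonempty ∧ C ⊆ A ∧ KConnectedIn H k C ∧
    ∀ C' : Set (Finset I), C ⊆ C' → C' ⊆ A → KConnectedIn H k C' → C' = C

/-- `H` is 1-connected: `H(1)` is 1-connected in `H`. -/
def OneConnected {I : Type*} [DecidableEq I] (H : Set (Finset I)) : Prop :=
  KConnectedIn H 1 (level H 1)

/-- One-sided version of an elementary homotopic pair of 1-paths in `H`. -/
def ElemPairCore {I : Type*} [DecidableEq I] (H : Set (Finset I))
    (ε ε' : List (Finset I)) : Prop :=
  ε = ε'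
  ∨ (∃ i₁ i₂ : I, ε = [{i₁}, {i₂}, {i₁}] ∧ ε' = [{i₁}])
  ∨ (∃ i₁ i₂ i₃ : I, ε = [{i₁}, {i₂}] ∧ ε' = [{i₁}, {i₃}, {i₂}] ∧
      IsKPath H 2 [{i₁, i₃}, {i₃, i₂}])

/-- An elementary homotopic pair of 1-paths in `H` (up to swapping the two paths). -/
def ElemPair {I : Type*} [DecidableEq I] (H : Set (Finset I))
    (ε ε' : List (Finset I)) : Prop :=
  ElemPairCore H ε ε' ∨ ElemPairCore H ε' ε

/-- `γ₂` is obtained from `γ₁` by an elementary homotopy. -/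
def ElemHomotopy {I : Type*} [DecidableEq I] (H : Set (Finset I))
    (γ₁ γ₂ : List (Finset I)) : Prop :=
  ∃ δ ε₁ ε₂ ρ : List (Finset I),
    ElemPair H ε₁ ε₂ ∧ γ₁ = δ ++ ε₁ ++ ρ ∧ γ₂ = δ ++ ε₂ ++ ρ

/-- `γ` and `γ'` are homotopically equivalent in `H` with support in `A`: they are linked
by a finite chain of elementary homotopies in which every intermediate 1-path has
support in `A`. -/
def HomotopicIn {I : Type*} [DecidableEq I] (H A : Set (Finset I))
    (γ γ' : List (Finset I)) : Prop :=
  (IsKPath H 1 γ ∧ ∀ J ∈ γ, J ∈ A) ∧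
    Relation.ReflTransGen
      (fun g₁ g₂ => ElemHomotopy H g₁ g₂ ∧ IsKPath H 1 g₂ ∧ ∀ J ∈ g₂, J ∈ A) γ γ'

/-- A 1-connected subset `A ⊆ H(1)` is simply connected in `H`: any two 1-paths in `H`
with support in `A` joining the same strata are homotopically equivalent in `H` with
support in `A`. -/
def SimplyConnectedIn {I : Type*} [DecidableEq I] (H A : Set (Finset I)) : Prop :=
  KConnectedIn H 1 A ∧
    ∀ γ γ' : List (Finset I), IsKPath H 1 γ → IsKPath H 1 γ' →
      (∀ J ∈ γ, J ∈ A) → (∀ J ∈ γ', J ∈ A) →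
      γ.head? = γ'.head? → γ.getLast? = γ'.getLast? →
      HomotopicIn H A γ γ'

/-- `H` is simply connected: `H(1)` is simply connected in `H`. -/
def SimplyConnected {I : Type*} [DecidableEq I] (H : Set (Finset I)) : Prop :=
  SimplyConnectedIn H (level H 1)

/-- The closure of `A` in `H`: the strata of `H` containing some element of `A`. -/
def Cl {I : Type*} (H A : Set (Finset I)) : Set (Finset I) :=
  {J' ∈ H | ∃ J ∈ A, J ⊆ J'}

/-- A datum of nodal strata `(N, {P_J})` in `H`: a subset `N ⊆ H` together with, for each
`J ∈ N`, a partition `P_J = {J₊, J₋}` of `J` into two nonempty parts, such that for every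
`J ∈ N` and `J' ⊆ J` one has `J' ∈ N` iff `J' ∩ J₊ ≠ ∅ ≠ J' ∩ J₋`, and in that case
`P_{J'} = {J' ∩ J₊, J' ∩ J₋}`. -/
structure NodalDatum {I : Type*} [DecidableEq I] (H : Set (Finset I)) : Type _ where
  N : Set (Finset I)
  N_sub : N ⊆ H
  plus : Finset I → Finset I
  minus : Finset I → Finset I
  plus_nonempty : ∀ J ∈ N, (plus J).Nonempty
  minus_nonempty : ∀ J ∈ N, (minus J).Nonempty
  union_eq : ∀ J ∈ N, plus J ∪ minus J = J
  disj : ∀ J ∈ N, Disjoint (plus J) (minus J)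
  mem_iff : ∀ J ∈ N, ∀ J' : Finset I, J' ⊆ J →
    (J' ∈ N ↔ (J' ∩ plus J).Nonempty ∧ (J' ∩ minus J).Nonempty)
  part_eq : ∀ J ∈ N, ∀ J' : Finset I, J' ⊆ J → J' ∈ N →
    ({plus J', minus J'} : Set (Finset I)) = {J' ∩ plus J, J' ∩ minus J}

/-- `N*`: the set of uninterrupted nodal strata, i.e. `J ∈ N` with `Cl_H({J}) ⊆ N`. -/
def Nstar {I : Type*} [DecidableEq I] {H : Set (Finset I)} (D : NodalDatum H) :
    Set (Finset I) :=
  {J ∈ D.N | ∀ J' ∈ H, J ⊆ J' → J' ∈ D.N}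

/-- A nodal block of `N` in `H`: a 2-connected component of `N(2) = N ∩ H(2)` in `H`. -/
def IsNodalBlock {I : Type*} [DecidableEq I] {H : Set (Finset I)} (D : NodalDatum H)
    (B : Set (Finset I)) : Prop :=
  IsKComponent H 2 (D.N ∩ level H 2) B

/-- A nodal separating block: a nodal block contained in `N*`. -/
def IsSepBlock {I : Type*} [DecidableEq I] {H : Set (Finset I)} (D : NodalDatum H)
    (B : Set (Finset I)) : Prop :=
  IsNodalBlock D B ∧ B ⊆ Nstar D

/-- The separator set: the union of all nodal separating blocks. -/
def SepSet {I : Type*} [DecidableEq I] {H : Set (Finset I)} (D : NodalDatum H) :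
    Set (Finset I) :=
  ⋃₀ {B | IsSepBlock D B}

/-- `A_B(i)`: the set of `{j} ∈ H(1)` joined to `{i}` by a 1-path `γ` in `H` with
`κ_B(γ)` even. -/
def ABset {I : Type*} [DecidableEq I] (H B : Set (Finset I)) (i : I) : Set (Finset I) :=
  {J ∈ level H 1 | ∃ γ : List (Finset I),
    IsKPath H 1 γ ∧ Joins γ {i} J ∧ Even (kappa B γ)}

/-- `B_B(i)`: the set of `{j} ∈ H(1)` joined to `{i}` by a 1-path `γ` in `H` with
`κ_B(γ)` odd. -/
def BBset {I : Type*} [DecidableEq I] (H B : Set (Finset I)) (i : I) : Set (Finset I) :=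
  {J ∈ level H 1 | ∃ γ : List (Finset I),
    IsKPath H 1 γ ∧ Joins γ {i} J ∧ Odd (kappa B γ)}

open Classical in
/-- `Φ_m` for the enumeration `B` of the nodal separating blocks and base point `i₀`,
evaluated on the singleton stratum `{i}` (identified with `i`):
`Φ_m({i})(ℓ) = 0` if `{i} ∈ A_{B_ℓ}(i₀)` and `Φ_m({i})(ℓ) = 1` (`true`) if
`{i} ∈ B_{B_ℓ}(i₀)`. -/
noncomputable def PhiM {I : Type*} [DecidableEq I] {n : ℕ} (H : Set (Finset I)) (i₀ : I)
    (B : Fin n → Set (Finset I)) (m : ℕ) (hm : m ≤ n) (i : I) : Fin m → Bool :=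
  fun ℓ => decide (({i} : Finset I) ∈ BBset H (B (Fin.castLE hm ℓ)) i₀)

/-!
Since `H` is simply connected and an elementary homotopy changes `κ_C` by an even amount
(in a triangle of `H(3)` meeting a separating block `C`, the edges lying in `C` are exactly
those that separate the two parts of the nodal partition of the triangle), the parity of
`κ_C(γ)` depends only on the endpoints of `γ`. Hence `{i}` and `{j}` in one fibre of `Φ_m`
are joined only by paths crossing each `B_ℓ` an even number of times. Take such a path with
the least total number of crossings. If it still crosses some `B_ℓ`, the endpoints of two
consecutive crossings lie on the same side of `B_ℓ`; following a 2-path inside `B_ℓ` from the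
first crossing stratum to the second while staying on that side gives a detour that crosses no
nodal stratum, and shortcutting along it contradicts minimality.
-/

section Strata

variable {I : Type*}

theorem singleton_mem_level_one {H : Set (Finset I)} (hH : IsCSS H) (x : I) :
    ({x} : Finset I) ∈ level H 1 :=
  ⟨hH.2 x, Finset.card_singleton x⟩

theorem Joins.reverse {γ : List (Finset I)} {J J' : Finset I} (h : Joins γ J J') :
    Joins γ.reverse J' J := by
  simpa [Joins, List.head?_reverse, List.getLast?_reverse] using h.symm

theorem Joins.append_tail {p q : List (Finset I)} {J K J' : Finset I} (hp : Joins p J K)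
    (hq : Joins q K J') : Joins (p ++ q.tail) J J' := by
  obtain ⟨t, rfl⟩ := List.head?_eq_some_iff.1 hq.1
  obtain ⟨s, rfl⟩ := List.getLast?_eq_some_iff.1 hp.2
  constructor
  · simpa [List.head?_append] using hp.1
  · simpa [List.getLast?_append] using hq.2

theorem Joins.replace {δ ε ε' ρ : List (Finset I)} {J J' : Finset I}
    (h : Joins (δ ++ ε ++ ρ) J J') (hh : ε.head? = ε'.head?) (hl : ε.getLast? = ε'.getLast?) :
    Joins (δ ++ ε' ++ ρ) J J' := by
  simpa only [Joins, List.head?_append, List.getLast?_append, hh, hl] using h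

end Strata

section Paths

variable {I : Type*} [DecidableEq I] {H : Set (Finset I)} {k : ℕ}

theorem isKPath_iff {γ : List (Finset I)} :
    IsKPath H k γ ↔ γ ≠ [] ∧ (∀ J ∈ γ, J ∈ level H k) ∧
      γ.IsChain (fun J J' => J ∪ J' ∈ level H (k + 1)) :=
  Iff.rfl

theorem IsKPath.infix {γ l : List (Finset I)} (hγ : IsKPath H k γ) (h : l <:+: γ)
    (hl : l ≠ []) : IsKPath H k l :=
  ⟨hl, fun J hJ => hγ.2.1 J (h.subset hJ), List.IsChain.infix hγ.2.2 h⟩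

theorem isKPath_singleton {J : Finset I} (hJ : J ∈ level H k) : IsKPath H k [J] :=
  isKPath_iff.2 ⟨List.cons_ne_nil _ _, by simpa using hJ, List.isChain_singleton _⟩

theorem isKPath_pair {J J' : Finset I} (hJ : J ∈ level H k) (hJ' : J' ∈ level H k)
    (h : J ∪ J' ∈ level H (k + 1)) : IsKPath H k [J, J'] :=
  isKPath_iff.2 ⟨List.cons_ne_nil _ _, by simp [hJ, hJ'], by simpa using h⟩

theorem IsKPath.reverse {γ : List (Finset I)} (hγ : IsKPath H k γ) :
    IsKPath H k γ.reverse := by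
  rw [isKPath_iff] at hγ ⊢
  refine ⟨by simpa using hγ.1, by simpa using hγ.2.1, List.isChain_reverse.2 ?_⟩
  simpa only [Finset.union_comm] using hγ.2.2

theorem IsKPath.append_tail {p q : List (Finset I)} {J : Finset I} (hp : IsKPath H k p)
    (hq : IsKPath H k q) (hpJ : p.getLast? = some J) (hqJ : q.head? = some J) :
    IsKPath H k (p ++ q.tail) := by
  obtain ⟨t, rfl⟩ := List.head?_eq_some_iff.1 hqJ
  rw [isKPath_iff] at hp hq ⊢
  have hchain := List.isChain_cons.1 hq.2.2
  refine ⟨by simp [hp.1], ?_, List.isChain_append.2 ⟨hp.2.2, hchain.2, ?_⟩⟩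
  · intro K hK
    rcases List.mem_append.1 hK with hK | hK
    exacts [hp.2.1 K hK, hq.2.1 K (List.mem_cons_of_mem J hK)]
  · simpa [hpJ] using hchain.1

theorem IsKPath.replace {δ ε ε' ρ : List (Finset I)} (hγ : IsKPath H k (δ ++ ε ++ ρ))
    (hε' : IsKPath H k ε') (hh : ε.head? = ε'.head?) (hl : ε.getLast? = ε'.getLast?) :
    IsKPath H k (δ ++ ε' ++ ρ) := by
  have hε : ε ≠ [] := by
    rintro rfl
    exact hε'.1 (List.head?_eq_none_iff.1 hh.symm)
  rw [isKPath_iff] at hγ hε' ⊢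
  obtain ⟨-, hmem, hchain⟩ := hγ
  simp only [List.append_assoc, List.isChain_append, List.head?_append_of_ne_nil _ hε,
    List.head?_append_of_ne_nil _ hε'.1] at hchain ⊢
  refine ⟨by simp [hε'.1], fun J hJ => ?_, ?_⟩
  · simp only [List.append_assoc, List.mem_append] at hJ hmem
    rcases hJ with hJ | hJ | hJ
    exacts [hmem J (Or.inl hJ), hε'.2.1 J hJ, hmem J (Or.inr (Or.inr hJ))]
  · rw [← hh, ← hl]
    exact ⟨hchain.1, ⟨hε'.2.2, hchain.2.1.2⟩, hchain.2.2⟩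

end Paths

section Kappa

variable {I : Type*} [DecidableEq I] (B : Set (Finset I))

theorem subSup_append_cons (p : List (Finset I)) (J : Finset I) (q : List (Finset I)) :
    subSup (p ++ J :: q) = subSup (p ++ [J]) ++ subSup (J :: q) := by
  induction p with
  | nil => rfl
  | cons K p ih =>
    cases p with
    | nil => rfl
    | cons K' p => exact congrArg ((K ∪ K') :: ·) ih

theorem kappa_append_cons (p : List (Finset I)) (J : Finset I) (q : List (Finset I)) :
    kappa B (p ++ J :: q) = kappa B (p ++ [J]) + kappa B (J :: q) := by
  rw [kappa, kappa, kappa, subSup_append_cons, List.countP_append]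

theorem kappa_singleton (J : Finset I) : kappa B [J] = 0 := rfl

open Classical in
theorem kappa_pair (J J' : Finset I) : kappa B [J, J'] = if J ∪ J' ∈ B then 1 else 0 := by
  simp [kappa, subSup, List.countP_cons]

theorem kappa_pair_comm (J J' : Finset I) : kappa B [J, J'] = kappa B [J', J] := by
  rw [kappa_pair, kappa_pair, Finset.union_comm]

theorem kappa_cons_cons (J J' : Finset I) (q : List (Finset I)) :
    kappa B (J :: J' :: q) = kappa B [J, J'] + kappa B (J' :: q) :=
  kappa_append_cons B [J] J' q

theorem kappa_append_of_head? {δ ε : List (Finset I)} {J : Finset I}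
    (hε : ε.head? = some J) : kappa B (δ ++ ε) = kappa B (δ ++ [J]) + kappa B ε := by
  obtain ⟨t, rfl⟩ := List.head?_eq_some_iff.1 hε
  exact kappa_append_cons B δ J t

theorem kappa_append_of_getLast? {ε ρ : List (Finset I)} {J : Finset I}
    (hε : ε.getLast? = some J) : kappa B (ε ++ ρ) = kappa B ε + kappa B (J :: ρ) := by
  obtain ⟨t, rfl⟩ := List.getLast?_eq_some_iff.1 hε
  simpa using kappa_append_cons B t J ρ

theorem kappa_append_tail {p q : List (Finset I)} {J : Finset I} (hp : p.getLast? = some J)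
    (hq : q.head? = some J) : kappa B (p ++ q.tail) = kappa B p + kappa B q := by
  obtain ⟨t, rfl⟩ := List.head?_eq_some_iff.1 hq
  exact kappa_append_of_getLast? B hp

/-- Additive form of `κ(δ ε' ρ) = κ(δ ε ρ) - κ(ε) + κ(ε')`, avoiding truncated subtraction. -/
theorem kappa_replace {δ ε ε' ρ : List (Finset I)} (hh : ε.head? = ε'.head?)
    (hl : ε.getLast? = ε'.getLast?) :
    kappa B (δ ++ ε ++ ρ) + kappa B ε' = kappa B (δ ++ ε' ++ ρ) + kappa B ε := by
  rcases eq_or_ne ε [] with rfl | hε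
  · rw [List.head?_nil, eq_comm, List.head?_eq_none_iff] at hh
    rw [hh]
  obtain ⟨J, hJ⟩ := Option.ne_none_iff_exists'.1 (List.head?_eq_none_iff.not.2 hε)
  obtain ⟨J', hJ'⟩ := Option.ne_none_iff_exists'.1 (List.getLast?_eq_none_iff.not.2 hε)
  have key : ∀ ε₀ : List (Finset I), ε₀.head? = some J → ε₀.getLast? = some J' →
      kappa B (δ ++ ε₀ ++ ρ) = kappa B (δ ++ [J]) + kappa B ε₀ + kappa B (J' :: ρ) := by
    intro ε₀ h h'
    rw [List.append_assoc, kappa_append_of_head? B (J := J) (by simp [List.head?_append, h]),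
      kappa_append_of_getLast? B h', add_assoc]
  rw [key ε hJ hJ', key ε' (hh ▸ hJ) (hl ▸ hJ')]
  omega

theorem kappa_mono {X Y : Set (Finset I)} (h : X ⊆ Y) (γ : List (Finset I)) :
    kappa X γ ≤ kappa Y γ :=
  List.countP_mono_left fun J _ hJ => by simpa using h (by simpa using hJ)

theorem exists_first_crossing {γ : List (Finset I)} (h : kappa B γ ≠ 0) :
    ∃ δ J J' ν, γ = δ ++ J :: J' :: ν ∧ J ∪ J' ∈ B ∧ kappa B (δ ++ [J]) = 0 := by
  induction γ with
  | nil => exact absurd rfl h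
  | cons K γ ih =>
    cases γ with
    | nil => exact absurd (kappa_singleton B K) h
    | cons K' ν =>
      by_cases hK : K ∪ K' ∈ B
      · exact ⟨[], K, K', ν, rfl, hK, kappa_singleton B K⟩
      have hKK' : kappa B [K, K'] = 0 := by rw [kappa_pair, if_neg hK]
      rw [kappa_cons_cons, hKK', zero_add] at h
      obtain ⟨δ, J, J', ν', hγ, hJ, hδ⟩ := ih h
      refine ⟨K :: δ, J, J', ν', by rw [hγ, List.cons_append], hJ, ?_⟩
      have hhead : (δ ++ [J]).head? = some K' := by
        cases δ <;> simp_all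
      rw [List.cons_append, ← List.singleton_append, kappa_append_of_head? B hhead]
      simpa [hδ] using hKK'

theorem exists_crossing_segment {γ : List (Finset I)} (hne : kappa B γ ≠ 0)
    (heven : Even (kappa B γ)) :
    ∃ δ s ν, γ = δ ++ s ++ ν ∧ kappa B s = 2 ∧ (∃ J J' t, s = J :: J' :: t ∧ J ∪ J' ∈ B) ∧
      ∃ t K K', s = t ++ [K, K'] ∧ K ∪ K' ∈ B := by
  obtain ⟨δ, a, b, ν, rfl, hab, hδ⟩ := exists_first_crossing B hne
  have hab1 : kappa B [a, b] = 1 := by rw [kappa_pair, if_pos hab]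
  have hγ : kappa B (δ ++ a :: b :: ν) = 1 + kappa B (b :: ν) := by
    rw [kappa_append_cons, hδ, kappa_cons_cons, hab1, zero_add]
  have hbν : kappa B (b :: ν) ≠ 0 := by
    intro h
    rw [hγ, h] at heven
    exact Nat.not_even_one heven
  obtain ⟨δ', c, d, ν', hbν, hcd, hδ'⟩ := exists_first_crossing B hbν
  have hcd1 : kappa B [c, d] = 1 := by rw [kappa_pair, if_pos hcd]
  obtain ⟨t, ht⟩ : ∃ t, δ' ++ [c, d] = b :: t := by
    rw [← List.head?_eq_some_iff]
    cases δ' <;> simp_all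
  refine ⟨δ, a :: b :: t, ν', ?_, ?_, ⟨a, b, t, rfl, hab⟩, a :: δ', c, d, by rw [← ht]; rfl, hcd⟩
  · rw [← ht, hbν]
    simp
  · rw [kappa_cons_cons, hab1, ← ht, kappa_append_cons, hδ', hcd1]

end Kappa

section Components

variable {I : Type*} [DecidableEq I] {H : Set (Finset I)} {k : ℕ}

theorem kConnectedIn_of_forall_joins {A : Set (Finset I)} {J₀ : Finset I}
    (h : ∀ J ∈ A, ∃ γ, IsKPath H k γ ∧ Joins γ J₀ J ∧ ∀ K ∈ γ, K ∈ A) :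
    KConnectedIn H k A := by
  intro J hJ J' hJ'
  obtain ⟨γ, hγ, hj, hγA⟩ := h J hJ
  obtain ⟨γ', hγ', hj', hγA'⟩ := h J' hJ'
  refine ⟨γ.reverse ++ γ'.tail, hγ.reverse.append_tail hγ' hj.reverse.2 hj'.1,
    hj.reverse.append_tail hj', fun K hK => ?_⟩
  rcases List.mem_append.1 hK with hK | hK
  exacts [hγA K (List.mem_reverse.1 hK), hγA' K (List.mem_of_mem_tail hK)]

theorem IsKComponent.mem_of_union_mem_level {A C : Set (Finset I)}
    (hC : IsKComponent H k A C) (hA : A ⊆ level H k) {J J' : Finset I} (hJ : J ∈ A)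
    (hJ' : J' ∈ C) (hJJ' : J ∪ J' ∈ level H (k + 1)) : J ∈ C := by
  obtain ⟨-, hCA, hconn, hmax⟩ := hC
  suffices hconn' : KConnectedIn H k (insert J C) by
    rw [← hmax _ (Set.subset_insert J C) (Set.insert_subset hJ hCA) hconn']
    exact Set.mem_insert J C
  refine kConnectedIn_of_forall_joins (J₀ := J) fun K hK => ?_
  rcases hK with rfl | hK
  · exact ⟨[K], isKPath_singleton (hA hJ), ⟨rfl, rfl⟩, by simp⟩
  obtain ⟨γ, hγ, hj, hγC⟩ := hconn J' hJ' K hK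
  refine ⟨[J, J'] ++ γ.tail, (isKPath_pair (hA hJ) (hA (hCA hJ')) hJJ').append_tail hγ rfl hj.1,
    Joins.append_tail ⟨rfl, rfl⟩ hj, fun L hL => ?_⟩
  simp only [List.cons_append, List.nil_append, List.mem_cons] at hL
  rcases hL with rfl | rfl | hL
  exacts [Set.mem_insert L C, Or.inr hJ', Or.inr (hγC L (List.mem_of_mem_tail hL))]

end Components

section Nodal

variable {I : Type*} [DecidableEq I] {H : Set (Finset I)} {D : NodalDatum H}
  {C : Set (Finset I)}

theorem NodalDatum.mem_minus_iff (D : NodalDatum H) {J : Finset I} (hJ : J ∈ D.N) {x : I}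
    (hx : x ∈ J) : x ∈ D.minus J ↔ x ∉ D.plus J := by
  rw [← D.union_eq J hJ, Finset.mem_union] at hx
  exact ⟨fun hm hp => Finset.disjoint_left.1 (D.disj J hJ) hp hm, hx.resolve_left⟩

theorem NodalDatum.pair_mem_iff (D : NodalDatum H) {J : Finset I} (hJ : J ∈ D.N) {x y : I}
    (hx : x ∈ J) (hy : y ∈ J) : {x, y} ∈ D.N ↔ ¬(x ∈ D.plus J ↔ y ∈ D.plus J) := by
  rw [D.mem_iff J hJ _ (Finset.insert_subset hx (Finset.singleton_subset_iff.2 hy))]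
  simp only [Finset.Nonempty, Finset.mem_inter, Finset.mem_insert, Finset.mem_singleton,
    or_and_right, exists_or, exists_eq_left, D.mem_minus_iff hJ hx, D.mem_minus_iff hJ hy]
  tauto

theorem IsNodalBlock.mem_iff_mem_N (hH : IsCSS H) (hC : IsNodalBlock D C) {T e f : Finset I}
    (hT : T ∈ level H 3) (he : e ∈ C) (heT : e ⊆ T) (hfT : f ⊆ T) (hf : f.card = 2) :
    f ∈ C ↔ f ∈ D.N := by
  refine ⟨fun h => (hC.2.1 h).1, fun hfN => ?_⟩
  have he2 : e.card = 2 := (hC.2.1 he).2.2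
  by_cases hfe : f ⊆ e
  · rwa [Finset.eq_of_subset_of_card_le hfe (by rw [he2, hf])]
  obtain ⟨x, hxf, hxe⟩ := Finset.not_subset.1 hfe
  have hlt : e.card < (f ∪ e).card :=
    Finset.card_lt_card <| (Finset.ssubset_iff_of_subset Finset.subset_union_right).2
      ⟨x, Finset.mem_union_left e hxf, hxe⟩
  have hunion : f ∪ e = T :=
    Finset.eq_of_subset_of_card_le (Finset.union_subset hfT heT) (by rw [hT.2]; omega)
  exact hC.mem_of_union_mem_level (fun _ h => h.2) ⟨hfN, hH.1 T hT.1 f hfT, hf⟩ he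
    (hunion ▸ hT)

theorem IsSepBlock.exists_side (hH : IsCSS H) (hC : IsSepBlock D C) {T : Finset I}
    (hT : T ∈ level H 3) : ∃ s : I → Prop, ∀ x ∈ T, ∀ y ∈ T, ({x, y} ∈ C ↔ ¬(s x ↔ s y)) := by
  by_cases hTC : ∃ e ∈ C, e ⊆ T
  · obtain ⟨e, he, heT⟩ := hTC
    have hTN : T ∈ D.N := (hC.2 he).2 T hT.1 heT
    refine ⟨(· ∈ D.plus T), fun x hx y hy => ?_⟩
    rw [← D.pair_mem_iff hTN hx hy]
    rcases eq_or_ne x y with rfl | hxy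
    · have hxN := D.pair_mem_iff hTN hx hx
      rw [Finset.pair_eq_singleton] at hxN ⊢
      exact iff_of_false (fun h => by simpa using (hC.1.2.1 h).2.2) (by simpa using hxN)
    · exact hC.1.mem_iff_mem_N hH hT he heT
        (Finset.insert_subset hx (Finset.singleton_subset_iff.2 hy)) (Finset.card_pair hxy)
  · simp only [not_exists, not_and] at hTC
    exact ⟨fun _ => True, fun x hx y hy => iff_of_false
      (hTC _ · (Finset.insert_subset hx (Finset.singleton_subset_iff.2 hy))) (by simp)⟩

theorem IsSepBlock.pair_mem_iff_of_mem_level_three (hH : IsCSS H) (hC : IsSepBlock D C)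
    {T : Finset I} (hT : T ∈ level H 3) {x y z : I} (hx : x ∈ T) (hy : y ∈ T) (hz : z ∈ T) :
    {x, y} ∈ C ↔ ¬({x, z} ∈ C ↔ {z, y} ∈ C) := by
  obtain ⟨s, hs⟩ := hC.exists_side hH hT
  rw [hs x hx y hy, hs x hx z hz, hs z hz y hy]
  tauto

end Nodal

section Crossings

variable {I : Type*} [DecidableEq I] {H : Set (Finset I)} {D : NodalDatum H}
  {C : Set (Finset I)} {i₀ : I}

theorem ElemPairCore.kappa_mod_two (hH : IsCSS H) (hC : IsSepBlock D C)
    {ε ε' : List (Finset I)} (h : ElemPairCore H ε ε') : kappa C ε % 2 = kappa C ε' % 2 := by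
  rcases h with rfl | ⟨i₁, i₂, rfl, rfl⟩ | ⟨i₁, i₂, i₃, rfl, rfl, hkp⟩
  · rfl
  · rw [kappa_cons_cons, kappa_pair_comm C {i₂}, kappa_singleton]
    omega
  · have hT := (List.isChain_cons_cons.1 (isKPath_iff.1 hkp).2.2).1
    have htri := hC.pair_mem_iff_of_mem_level_three hH hT (x := i₁) (y := i₂) (z := i₃)
      (by simp) (by simp) (by simp)
    rw [kappa_cons_cons C {i₁} {i₃}, kappa_pair, kappa_pair, kappa_pair, ← Finset.insert_eq,
      ← Finset.insert_eq, ← Finset.insert_eq]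
    split_ifs <;> simp_all

theorem ElemHomotopy.kappa_mod_two (hH : IsCSS H) (hC : IsSepBlock D C)
    {γ γ' : List (Finset I)} (h : ElemHomotopy H γ γ') : kappa C γ % 2 = kappa C γ' % 2 := by
  obtain ⟨δ, ε, ε', ρ, hpair, rfl, rfl⟩ := h
  have hends : ε.head? = ε'.head? ∧ ε.getLast? = ε'.getLast? := by
    rcases hpair with h | h <;>
      rcases h with rfl | ⟨_, _, rfl, rfl⟩ | ⟨_, _, _, rfl, rfl, -⟩ <;> simp
  have hε : kappa C ε % 2 = kappa C ε' % 2 :=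
    hpair.elim (·.kappa_mod_two hH hC) fun h => (h.kappa_mod_two hH hC).symm
  have := kappa_replace C (δ := δ) (ρ := ρ) hends.1 hends.2
  omega

theorem HomotopicIn.kappa_mod_two (hH : IsCSS H) (hC : IsSepBlock D C)
    {A : Set (Finset I)} {γ γ' : List (Finset I)} (h : HomotopicIn H A γ γ') :
    kappa C γ % 2 = kappa C γ' % 2 := by
  obtain ⟨-, hrel⟩ := h
  induction hrel with
  | refl => rfl
  | tail _ hstep ih => exact ih.trans (hstep.1.kappa_mod_two hH hC)

theorem kappa_mod_two_eq_of_simplyConnected (hH : IsCSS H) (hsc : SimplyConnected H)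
    (hC : IsSepBlock D C) {γ γ' : List (Finset I)} (hγ : IsKPath H 1 γ)
    (hγ' : IsKPath H 1 γ') (hh : γ.head? = γ'.head?) (hl : γ.getLast? = γ'.getLast?) :
    kappa C γ % 2 = kappa C γ' % 2 :=
  (hsc.2 γ γ' hγ hγ' hγ.2.1 hγ'.2.1 hh hl).kappa_mod_two hH hC

theorem mem_BBset_iff_odd_kappa (hH : IsCSS H) (hsc : SimplyConnected H)
    (hC : IsSepBlock D C) {p : List (Finset I)} {J : Finset I} (hp : IsKPath H 1 p)
    (hj : Joins p {i₀} J) : J ∈ BBset H C i₀ ↔ Odd (kappa C p) := by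
  refine ⟨fun ⟨_, q, hq, hqj, hodd⟩ => ?_,
    fun hodd => ⟨hp.2.1 J (List.mem_of_mem_getLast? hj.2), p, hp, hj, hodd⟩⟩
  have := kappa_mod_two_eq_of_simplyConnected hH hsc hC hq hp (hqj.1.trans hj.1.symm)
    (hqj.2.trans hj.2.symm)
  rw [Nat.odd_iff] at hodd ⊢
  omega

theorem even_kappa_iff (hH : IsCSS H) (hsc : SimplyConnected H) (hC : IsSepBlock D C)
    {p : List (Finset I)} {J J' : Finset I} (hp : IsKPath H 1 p) (hj : Joins p J J') :
    Even (kappa C p) ↔ (J ∈ BBset H C i₀ ↔ J' ∈ BBset H C i₀) := by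
  obtain ⟨q, hq, hqj, -⟩ := hsc.1 {i₀} (singleton_mem_level_one hH i₀) J
    (hp.2.1 J (List.mem_of_mem_head? hj.1))
  rw [mem_BBset_iff_odd_kappa hH hsc hC hq hqj,
    mem_BBset_iff_odd_kappa hH hsc hC (hq.append_tail hp hqj.2 hj.1) (hqj.append_tail hj),
    kappa_append_tail C hqj.2 hj.1, Nat.even_iff, Nat.odd_iff, Nat.odd_iff]
  omega

theorem IsSepBlock.union_mem_iff (hH : IsCSS H) (hsc : SimplyConnected H)
    (hC : IsSepBlock D C) {J J' : Finset I} (hJ : J ∈ level H 1) (hJ' : J' ∈ level H 1)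
    (h : J ∪ J' ∈ level H 2) : J ∪ J' ∈ C ↔ ¬(J ∈ BBset H C i₀ ↔ J' ∈ BBset H C i₀) := by
  rw [← even_kappa_iff (J' := J') hH hsc hC (isKPath_pair hJ hJ' h) ⟨rfl, rfl⟩, kappa_pair]
  split_ifs <;> simp_all

theorem IsSepBlock.exists_eq_pair (hH : IsCSS H) (hsc : SimplyConnected H)
    (hC : IsSepBlock D C) {E : Finset I} (hE : E ∈ C) :
    ∃ x y, E = {x, y} ∧ ¬(({x} : Finset I) ∈ BBset H C i₀ ↔ {y} ∈ BBset H C i₀) := by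
  have hE2 := (hC.1.2.1 hE).2
  obtain ⟨x, y, -, rfl⟩ := Finset.card_eq_two.1 hE2.2
  rw [Finset.insert_eq] at hE hE2
  exact ⟨x, y, Finset.insert_eq x {y}, (hC.union_mem_iff hH hsc (singleton_mem_level_one hH x)
    (singleton_mem_level_one hH y) hE2).1 hE⟩

theorem IsSepBlock.exists_mem_iff (hH : IsCSS H) (hsc : SimplyConnected H)
    (hC : IsSepBlock D C) {E : Finset I} (hE : E ∈ C) (J : Finset I) :
    ∃ x ∈ E, (({x} : Finset I) ∈ BBset H C i₀ ↔ J ∈ BBset H C i₀) := by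
  obtain ⟨x, y, rfl, hxy⟩ := hC.exists_eq_pair hH hsc hE
  by_cases hx : ({x} : Finset I) ∈ BBset H C i₀ ↔ J ∈ BBset H C i₀
  · exact ⟨x, by simp, hx⟩
  · exact ⟨y, by simp, by tauto⟩

theorem IsSepBlock.eq_of_mem_of_iff (hH : IsCSS H) (hsc : SimplyConnected H)
    (hC : IsSepBlock D C) {E : Finset I} (hE : E ∈ C) {x y : I} (hx : x ∈ E) (hy : y ∈ E)
    (hxy : ({x} : Finset I) ∈ BBset H C i₀ ↔ {y} ∈ BBset H C i₀) : x = y := by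
  obtain ⟨u, w, rfl, huw⟩ := hC.exists_eq_pair hH hsc hE
  simp only [Finset.mem_insert, Finset.mem_singleton] at hx hy
  rcases hx with rfl | rfl <;> rcases hy with rfl | rfl <;> tauto

end Crossings

section Detours

variable {I : Type*} [DecidableEq I] {H : Set (Finset I)} {D : NodalDatum H}
  {C : Set (Finset I)} {i₀ : I}

theorem IsSepBlock.exists_path_kappa_N_eq_zero_of_adj (hH : IsCSS H)
    (hsc : SimplyConnected H) (hC : IsSepBlock D C) {E E' : Finset I} (hE : E ∈ C)
    (hEE' : E ∪ E' ∈ level H 3) {x y : I} (hx : x ∈ E) (hy : y ∈ E')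
    (hxy : ({x} : Finset I) ∈ BBset H C i₀ ↔ {y} ∈ BBset H C i₀) :
    ∃ τ, IsKPath H 1 τ ∧ Joins τ {x} {y} ∧ kappa D.N τ = 0 := by
  rcases eq_or_ne x y with rfl | hne
  · exact ⟨[{x}], isKPath_singleton (singleton_mem_level_one hH x), ⟨rfl, rfl⟩,
      kappa_singleton _ _⟩
  have hsub : {x, y} ⊆ E ∪ E' := Finset.insert_subset (Finset.mem_union_left E' hx)
    (Finset.singleton_subset_iff.2 (Finset.mem_union_right E hy))
  have hxy2 : {x} ∪ {y} ∈ level H 2 := by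
    rw [← Finset.insert_eq]
    exact ⟨hH.1 _ hEE'.1 _ hsub, Finset.card_pair hne⟩
  -- A nodal edge of the triangle `E ∪ E'` would lie in `C`, hence separate `x` from `y`.
  have hN : {x} ∪ {y} ∉ D.N := by
    rw [← Finset.insert_eq, ← hC.1.mem_iff_mem_N hH hEE' hE Finset.subset_union_left hsub
      (Finset.card_pair hne), Finset.insert_eq, hC.union_mem_iff hH hsc
      (singleton_mem_level_one hH x) (singleton_mem_level_one hH y) hxy2]
    exact not_not_intro hxy
  refine ⟨[{x}, {y}], isKPath_pair (singleton_mem_level_one hH x)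
    (singleton_mem_level_one hH y) hxy2, ⟨rfl, rfl⟩, ?_⟩
  rw [kappa_pair, if_neg hN]

theorem IsSepBlock.exists_path_kappa_N_eq_zero (hH : IsCSS H) (hsc : SimplyConnected H)
    (hC : IsSepBlock D C) {η : List (Finset I)} (hη : IsKPath H 2 η) (hηC : ∀ E ∈ η, E ∈ C)
    {E₁ E₂ : Finset I} (hj : Joins η E₁ E₂) {x y : I} (hx : x ∈ E₁) (hy : y ∈ E₂)
    (hxy : ({x} : Finset I) ∈ BBset H C i₀ ↔ {y} ∈ BBset H C i₀) :
    ∃ τ, IsKPath H 1 τ ∧ Joins τ {x} {y} ∧ kappa D.N τ = 0 := by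
  induction η generalizing E₁ x with
  | nil => exact absurd hη.1 (by simp)
  | cons E η ih =>
    obtain rfl : E = E₁ := by simpa using hj.1
    cases η with
    | nil =>
      obtain rfl : E = E₂ := by simpa using hj.2
      obtain rfl := hC.eq_of_mem_of_iff hH hsc (hηC E (by simp)) hx hy hxy
      exact ⟨[{x}], isKPath_singleton (singleton_mem_level_one hH x), ⟨rfl, rfl⟩,
        kappa_singleton _ _⟩
    | cons E' η =>
      have hE' : E' ∈ C := hηC E' (by simp)
      obtain ⟨x', hx', hxx'⟩ := hC.exists_mem_iff hH hsc hE' {x}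
      obtain ⟨σ, hσ, hσj, hσN⟩ := hC.exists_path_kappa_N_eq_zero_of_adj hH hsc
        (hηC E (by simp)) (List.isChain_cons_cons.1 (isKPath_iff.1 hη).2.2).1 hx hx' hxx'.symm
      obtain ⟨τ, hτ, hτj, hτN⟩ := ih (hη.infix (List.suffix_cons E _).isInfix (by simp))
        (fun K hK => hηC K (List.mem_cons_of_mem E hK)) ⟨rfl, by simpa using hj.2⟩ hx'
        (hxx'.trans hxy)
      exact ⟨σ ++ τ.tail, hσ.append_tail hτ hσj.2 hτj.1, hσj.append_tail hτj,
        by rw [kappa_append_tail _ hσj.2 hτj.1, hσN, hτN]⟩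

theorem IsSepBlock.exists_path_kappa_lt (hH : IsCSS H) (hsc : SimplyConnected H)
    (hC : IsSepBlock D C) {γ : List (Finset I)} {J J' : Finset I} (hγ : IsKPath H 1 γ)
    (hj : Joins γ J J') (heven : Even (kappa C γ)) (hne : kappa C γ ≠ 0) :
    ∃ γ', IsKPath H 1 γ' ∧ Joins γ' J J' ∧ kappa C γ' < kappa C γ ∧
      ∀ X ⊆ D.N, kappa X γ' ≤ kappa X γ := by
  obtain ⟨δ, s, ν, rfl, hs, ⟨a, b, t, rfl, hab⟩, t', c, d, hst', hcd⟩ :=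
    exists_crossing_segment C hne heven
  have hsγ : IsKPath H 1 (a :: b :: t) := hγ.infix (List.infix_append δ _ ν) (by simp)
  have hsj : Joins (a :: b :: t) a d := ⟨rfl, by rw [hst']; simp⟩
  obtain ⟨va, rfl⟩ := Finset.card_eq_one.1 (hsγ.2.1 a (by simp)).2
  obtain ⟨vd, rfl⟩ := Finset.card_eq_one.1 (hsγ.2.1 d (by rw [hst']; simp)).2
  -- Sides are compared relative to an arbitrary base point; `va` will do.
  have hσ := (even_kappa_iff (i₀ := va) hH hsc hC hsγ hsj).1 (hs ▸ even_two)
  obtain ⟨η, hη, hηj, hηC⟩ := hC.1.2.2.1 _ hab _ hcd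
  obtain ⟨τ, hτ, hτj, hτN⟩ :=
    hC.exists_path_kappa_N_eq_zero hH hsc hη hηC hηj (by simp) (by simp) hσ
  have hh : ({va} :: b :: t).head? = τ.head? := hτj.1.symm
  have hl : ({va} :: b :: t).getLast? = τ.getLast? := hsj.2.trans hτj.2.symm
  have hτX : ∀ X ⊆ D.N, kappa X τ = 0 := fun X hX => Nat.le_zero.1 (hτN ▸ kappa_mono hX τ)
  refine ⟨δ ++ τ ++ ν, hγ.replace hτ hh hl, hj.replace hh hl, ?_, fun X hX => ?_⟩
  · have := kappa_replace C (δ := δ) (ρ := ν) hh hl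
    have := hτX C fun _ h => (hC.1.2.1 h).1
    omega
  · have := kappa_replace X (δ := δ) (ρ := ν) hh hl
    have := hτX X hX
    omega

end Detours

theorem exists_path_kappa_eq_zero {I : Type*} [DecidableEq I] {H : Set (Finset I)}
    {D : NodalDatum H} {ι : Type*} [Fintype ι] (hH : IsCSS H) (hsc : SimplyConnected H)
    {C : ι → Set (Finset I)} (hC : ∀ ℓ, IsSepBlock D (C ℓ)) {i₀ : I} {J J' : Finset I}
    (hJ : J ∈ level H 1) (hJ' : J' ∈ level H 1)
    (hσ : ∀ ℓ, (J ∈ BBset H (C ℓ) i₀ ↔ J' ∈ BBset H (C ℓ) i₀)) :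
    ∃ γ, IsKPath H 1 γ ∧ Joins γ J J' ∧ ∀ ℓ, kappa (C ℓ) γ = 0 := by
  classical
  have hex : ∃ N γ, IsKPath H 1 γ ∧ Joins γ J J' ∧ ∑ ℓ, kappa (C ℓ) γ = N := by
    obtain ⟨γ, hγ, hj, -⟩ := hsc.1 J hJ J' hJ'
    exact ⟨_, γ, hγ, hj, rfl⟩
  obtain ⟨γ, hγ, hj, hsum⟩ := Nat.find_spec hex
  refine ⟨γ, hγ, hj, fun ℓ => by_contra fun hne => ?_⟩
  obtain ⟨γ', hγ', hj', hlt, hle⟩ := (hC ℓ).exists_path_kappa_lt hH hsc hγ hj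
    ((even_kappa_iff hH hsc (hC ℓ) hγ hj).2 (hσ ℓ)) hne
  refine Nat.find_min hex ?_ ⟨γ', hγ', hj', rfl⟩
  rw [← hsum]
  exact Finset.sum_lt_sum (fun ℓ' _ => hle _ fun _ h => ((hC ℓ').1.2.1 h).1)
    ⟨ℓ, Finset.mem_univ ℓ, hlt⟩

theorem fiber_joined_without_crossings_general
    {I : Type*} [DecidableEq I] (H : Set (Finset I))
    (hH : IsCSS H) (hsc : SimplyConnected H)
    (D : NodalDatum H) (n : ℕ) (B : Fin n → Set (Finset I))
    (hblock : ∀ ℓ : Fin n, IsSepBlock D (B ℓ))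
    (i₀ : I) (m : ℕ) (hm : m ≤ n)
    (c : Fin m → Bool)
    (i j : I) (hi : PhiM H i₀ B m hm i = c) (hj : PhiM H i₀ B m hm j = c) :
    ∃ γ : List (Finset I), IsKPath H 1 γ ∧
      Joins γ ({i} : Finset I) ({j} : Finset I) ∧
      ∀ ℓ : Fin m, kappa (B (Fin.castLE hm ℓ)) γ = 0 :=
  exists_path_kappa_eq_zero hH hsc (fun ℓ => hblock _) (singleton_mem_level_one hH i)
    (singleton_mem_level_one hH j) fun ℓ => by
      simpa [PhiM] using congrFun (hi.trans hj.symm) ℓ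

/-- For `0 ≤ m ≤ n`, `c ∈ Δ_m` and `{i}, {j} ∈ Φ_m⁻¹(c)`, there is a
1-path `γ` in `H` joining `{i}` and `{j}` with `κ_{B_ℓ}(γ) = 0` for all `ℓ = 1, …, m`. -/
theorem fiber_joined_without_crossings
    {I : Type*} [Fintype I] [DecidableEq I] (H : Set (Finset I))
    (hH : IsCSS H) (hsc : SimplyConnected H)
    (D : NodalDatum H) (n : ℕ) (B : Fin n → Set (Finset I))
    (hblock : ∀ ℓ : Fin n, IsSepBlock D (B ℓ)) (hinj : Function.Injective B)
    (hsurj : ∀ C : Set (Finset I), IsSepBlock D C → ∃ ℓ : Fin n, C = B ℓ)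
    (i₀ : I) (m : ℕ) (hm : m ≤ n)
    (c : Fin m → Bool) (hc : c ∈ Set.range (PhiM H i₀ B m hm))
    (i j : I) (hi : PhiM H i₀ B m hm i = c) (hj : PhiM H i₀ B m hm j = c) :
    ∃ γ : List (Finset I), IsKPath H 1 γ ∧
      Joins γ ({i} : Finset I) ({j} : Finset I) ∧
      ∀ ℓ : Fin m, kappa (B (Fin.castLE hm ℓ)) γ = 0 :=
  fiber_joined_without_crossings_general H hH hsc D n B hblock i₀ m hm c i j hi hj
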